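/- arXiv:math/0206200 — 6 statements merged into one kernel-verified Lean document; each statement's English description precedes it below -/
import Mathlib

section
/- For complex a1, a2, b1 with s1 = b1 - a1 - a2, the ratio Γ(a1+n)Γ(a2+n)/(Γ(b1+n)Γ(-s1+n)) tends to 1 as the natural number n tends to infinity. -/
/-!
Write `W c n = Γ(c + n) / (Γ(n) n^c)`. Euler's limit formula says `GammaSeq c n → Γ(c)`, and
`Γ(c) / GammaSeq c n` is exactly `W (c + 1) n`, so `W c → 1` whenever `Γ(c - 1) ≠ 0`. The functional
equation gives `W (c + 1) n = (c + n) / n · W c n`, which moves this down to every `c`. Finally the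
ratio in the theorem is `W a₁ W a₂ / (W b₁ W (-s₁))`, because `a₁ + a₂ = b₁ - s₁`.
-/

open Filter Finset Topology

namespace Complex

theorem add_natCast_ne_zero_of_Gamma_ne_zero {c : ℂ} (hc : Gamma c ≠ 0) (n : ℕ) : c + n ≠ 0 :=
  fun h ↦ hc <| (Gamma_eq_zero_iff c).2 ⟨n, eq_neg_of_add_eq_zero_left h⟩

theorem Gamma_natCast_ne_zero {n : ℕ} (hn : n ≠ 0) : Gamma n ≠ 0 :=
  Gamma_ne_zero_of_re_pos (by simpa using Nat.pos_of_ne_zero hn)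

theorem Gamma_add_nat_eq_mul_prod {c : ℂ} (hc : Gamma c ≠ 0) (n : ℕ) :
    Gamma (c + n) = Gamma c * ∏ j ∈ range n, (c + j) := by
  induction n with
  | zero => simp
  | succ n ih =>
    rw [Nat.cast_succ, ← add_assoc, Gamma_add_one _ (add_natCast_ne_zero_of_Gamma_ne_zero hc n),
      ih, prod_range_succ]
    ring

theorem Gamma_add_one_add_nat_div_eq_Gamma_div_GammaSeq {c : ℂ} (hc : Gamma c ≠ 0) {n : ℕ}
    (hn : n ≠ 0) :
    Gamma (c + 1 + n) / (Gamma n * (n : ℂ) ^ (c + 1)) = Gamma c / GammaSeq c n := by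
  have hn' : (n : ℂ) ≠ 0 := Nat.cast_ne_zero.2 hn
  rw [add_right_comm, add_assoc, ← Nat.cast_add_one, Gamma_add_nat_eq_mul_prod hc, GammaSeq,
    ← Gamma_nat_eq_factorial, Gamma_add_one _ hn', cpow_add _ _ hn', cpow_one]
  field_simp

theorem tendsto_Gamma_add_one_add_nat_div {c : ℂ} (hc : Gamma c ≠ 0) :
    Tendsto (fun n : ℕ ↦ Gamma (c + 1 + n) / (Gamma n * (n : ℂ) ^ (c + 1))) atTop (𝓝 1) := by
  have h := (tendsto_const_nhds (x := Gamma c)).div (GammaSeq_tendsto_Gamma c) hc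
  rw [div_self hc] at h
  refine h.congr' ?_
  filter_upwards [eventually_ne_atTop 0] with n hn
  exact (Gamma_add_one_add_nat_div_eq_Gamma_div_GammaSeq hc hn).symm

theorem tendsto_Gamma_add_nat_div_of_add_one {c : ℂ}
    (h : Tendsto (fun n : ℕ ↦ Gamma (c + 1 + n) / (Gamma n * (n : ℂ) ^ (c + 1))) atTop (𝓝 1)) :
    Tendsto (fun n : ℕ ↦ Gamma (c + n) / (Gamma n * (n : ℂ) ^ c)) atTop (𝓝 1) := by
  have h' := (tendsto_natCast_div_add_atTop c).mul h
  rw [one_mul] at h'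
  refine h'.congr' ?_
  filter_upwards [tendsto_natCast_atTop_atTop.eventually_gt_atTop ‖c‖] with n hn
  have hn' : (n : ℂ) ≠ 0 := by
    rw [← norm_pos_iff, norm_natCast]
    exact (norm_nonneg c).trans_lt hn
  have hcn : c + n ≠ 0 := fun hzero ↦ by
    rw [eq_neg_of_add_eq_zero_left hzero, norm_neg, norm_natCast] at hn
    exact lt_irrefl _ hn
  rw [add_right_comm, Gamma_add_one _ hcn, cpow_add _ _ hn', cpow_one, add_comm (n : ℂ)]
  field_simp

theorem tendsto_Gamma_add_nat_div (c : ℂ) :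
    Tendsto (fun n : ℕ ↦ Gamma (c + n) / (Gamma n * (n : ℂ) ^ c)) atTop (𝓝 1) := by
  obtain ⟨m, hm⟩ := exists_nat_gt (1 - c.re)
  have hshift :
      Tendsto (fun n : ℕ ↦ Gamma (c + m + n) / (Gamma n * (n : ℂ) ^ (c + m))) atTop (𝓝 1) := by
    have hre : 0 < (c + m - 1).re := by
      rw [sub_re, add_re, natCast_re, one_re]
      linarith
    simpa using tendsto_Gamma_add_one_add_nat_div (Gamma_ne_zero_of_re_pos hre)
  clear hm
  induction m with
  | zero => simpa using hshift
  | succ m ih =>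
    refine ih (tendsto_Gamma_add_nat_div_of_add_one ?_)
    simpa [add_assoc] using hshift

end Complex

open Complex

theorem gamma_ratio_tendsto_one (a1 a2 b1 s1 : ℂ) (hs : s1 = b1 - a1 - a2) :
    Tendsto (fun n : ℕ =>
        Complex.Gamma (a1 + n) * Complex.Gamma (a2 + n) /
          (Complex.Gamma (b1 + n) * Complex.Gamma (-s1 + n)))
      atTop (nhds 1) := by
  have h := ((tendsto_Gamma_add_nat_div a1).mul (tendsto_Gamma_add_nat_div a2)).div
    ((tendsto_Gamma_add_nat_div b1).mul (tendsto_Gamma_add_nat_div (-s1))) (by norm_num)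
  rw [mul_one, div_one] at h
  refine h.congr' ?_
  filter_upwards [eventually_ne_atTop 0] with n hn
  have hn' : (n : ℂ) ≠ 0 := Nat.cast_ne_zero.2 hn
  have hGn := Gamma_natCast_ne_zero hn
  have hpow_ne (z : ℂ) : (n : ℂ) ^ z ≠ 0 := cpow_ne_zero_iff.2 (.inl hn')
  have hpow : (n : ℂ) ^ b1 * (n : ℂ) ^ (-s1) = (n : ℂ) ^ a1 * (n : ℂ) ^ a2 := by
    rw [← cpow_add _ _ hn', ← cpow_add _ _ hn', hs]
    ring_nf
  simp only [Pi.div_apply, div_mul_div_comm, mul_mul_mul_comm (Gamma (n : ℂ)), hpow]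
  exact div_div_div_cancel_right₀
    (mul_ne_zero (mul_ne_zero hGn hGn) (mul_ne_zero (hpow_ne a1) (hpow_ne a2))) _ _
end

section
/- For real a1, a2, b1 with s1 = b1 - a1 - a2, we have Γ(a1+n)Γ(a2+n)/(Γ(b1+n)Γ(-s1+n)) = 1 + (s1+a1)(s1+a2)/(1+s1-n) + O(n^{-2}) as n → ∞ through the natural numbers. -/
/-!
Write `g n` for the Gamma ratio and `h n = 1 + c / (1 + s1 - n)`, `c = (s1 + a1)(s1 + a2)`, for
Dingle's first-order approximant. Because `a1 + a2 = b1 + (-s1)`, Euler's limit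
`Γ x = lim n^x n! / (x (x+1) ⋯ (x+n))` gives `g n → 1`, and clearly `h n → 1`. The functional
equation of `Γ` gives `g (n + 1) = g n * ρ n` with `ρ n = (a1 + n)(a2 + n) / ((b1 + n)(n - s1))`,
and `h` is exactly the correction for which `h (n + 1) - h n * ρ n = O(n⁻³)`. Hence the increments
of `h / g` are `O(n⁻³)`; as `h / g → 1`, summing the tail gives `h / g - 1 = O(n⁻²)`, i.e.
`g - h = O(n⁻²)`.
-/

open Filter Asymptotics Topology
open scoped Nat

namespace Real

theorem Gamma_add_nat_eq_mul_prod {x : ℝ} (hx : 0 < x) (n : ℕ) :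
    Gamma (x + n) = Gamma x * ∏ j ∈ Finset.range n, (x + j) := by
  induction n with
  | zero => simp
  | succ n ih =>
    rw [Nat.cast_succ, ← add_assoc, Gamma_add_one (by positivity), ih,
      Finset.prod_range_succ]
    ring

theorem Gamma_div_GammaSeq {x : ℝ} (hx : 0 < x) (n : ℕ) :
    Gamma x / GammaSeq x n = Gamma (x + (n + 1)) / (n ! * (n : ℝ) ^ x) := by
  rw [GammaSeq, ← Nat.cast_succ, Gamma_add_nat_eq_mul_prod hx]
  rcases n.eq_zero_or_pos with rfl | hn
  · simp [zero_rpow hx.ne']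
  have := rpow_pos_of_pos (Nat.cast_pos.2 hn) x
  field_simp

theorem tendsto_Gamma_add_div_factorial_mul_rpow {x : ℝ} (hx : 0 < x) :
    Tendsto (fun n : ℕ => Gamma (x + (n + 1)) / (n ! * (n : ℝ) ^ x)) atTop (𝓝 1) := by
  have hΓ := (Gamma_pos_of_pos hx).ne'
  have := (tendsto_const_nhds (x := Gamma x)).div (GammaSeq_tendsto_Gamma x) hΓ
  rw [div_self hΓ] at this
  exact this.congr fun n => Gamma_div_GammaSeq hx n

end Real

noncomputable def gammaRatio (p q r t : ℝ) (n : ℕ) : ℝ :=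
  Real.Gamma (p + n) * Real.Gamma (q + n) / (Real.Gamma (r + n) * Real.Gamma (t + n))

theorem gammaRatio_add_nat (p q r t : ℝ) (m n : ℕ) :
    gammaRatio p q r t (n + m) = gammaRatio (p + m) (q + m) (r + m) (t + m) n := by
  simp only [gammaRatio, Nat.cast_add, add_comm (n : ℝ), add_assoc]

theorem tendsto_gammaRatio_of_pos {p q r t : ℝ} (hp : 0 < p) (hq : 0 < q) (hr : 0 < r)
    (ht : 0 < t) (h : p + q = r + t) : Tendsto (gammaRatio p q r t) atTop (𝓝 1) := by
  have hlim := ((Real.tendsto_Gamma_add_div_factorial_mul_rpow hp).mul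
    (Real.tendsto_Gamma_add_div_factorial_mul_rpow hq)).div
    ((Real.tendsto_Gamma_add_div_factorial_mul_rpow hr).mul
    (Real.tendsto_Gamma_add_div_factorial_mul_rpow ht)) (by norm_num)
  rw [mul_one, div_one] at hlim
  refine (tendsto_add_atTop_iff_nat 1).1 (hlim.congr' ?_)
  filter_upwards [eventually_gt_atTop 0] with n hn
  have hn : (0 : ℝ) < n := Nat.cast_pos.2 hn
  have hpow : (n : ℝ) ^ p * (n : ℝ) ^ q = (n : ℝ) ^ r * (n : ℝ) ^ t := by
    rw [← Real.rpow_add hn, ← Real.rpow_add hn, h]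
  simp only [Pi.div_apply, gammaRatio, Nat.cast_succ]
  field_simp
  exact hpow.symm

theorem tendsto_gammaRatio {p q r t : ℝ} (h : p + q = r + t) :
    Tendsto (gammaRatio p q r t) atTop (𝓝 1) := by
  obtain ⟨m, hm⟩ := exists_nat_gt (max (max (-p) (-q)) (max (-r) (-t)))
  simp only [max_lt_iff] at hm
  refine (tendsto_add_atTop_iff_nat m).1 ?_
  simp only [gammaRatio_add_nat]
  exact tendsto_gammaRatio_of_pos (by linarith) (by linarith) (by linarith) (by linarith)
    (by linarith)

theorem gammaRatio_succ {p q r t : ℝ} {n : ℕ} (hp : p + n ≠ 0) (hq : q + n ≠ 0) (hr : r + n ≠ 0)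
    (ht : t + n ≠ 0) :
    gammaRatio p q r t (n + 1) =
      gammaRatio p q r t n * ((p + n) * (q + n) / ((r + n) * (t + n))) := by
  simp only [gammaRatio, Nat.cast_succ, ← add_assoc, Real.Gamma_add_one, hp, hq, hr, ht,
    ne_eq, not_false_eq_true]
  rw [mul_mul_mul_comm, mul_mul_mul_comm (r + n), mul_div_mul_comm, mul_comm]

theorem abs_sub_le_of_tendsto_of_abs_sub_succ_le {u v : ℕ → ℝ} {L : ℝ} {N : ℕ}
    (hu : Tendsto u atTop (𝓝 L)) (hv : Tendsto v atTop (𝓝 0))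
    (hstep : ∀ k, N ≤ k → |u (k + 1) - u k| ≤ v k - v (k + 1)) {n : ℕ} (hn : N ≤ n) :
    |u n - L| ≤ v n := by
  have hdist : ∀ M, n ≤ M → dist (u n) (u M) ≤ v n - v M := fun M hM => by
    rw [← neg_sub (v M), ← Finset.sum_Ico_sub v hM, ← Finset.sum_neg_distrib]
    refine dist_le_Ico_sum_of_dist_le hM fun hk _ => ?_
    rw [dist_comm, Real.dist_eq, neg_sub]
    exact hstep _ (hn.trans hk)
  rw [← Real.dist_eq, ← sub_zero (v n)]
  exact le_of_tendsto_of_tendsto (tendsto_const_nhds.dist hu) (tendsto_const_nhds.sub hv)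
    (eventually_atTop.2 ⟨n, hdist⟩)

theorem isBigO_sub_of_isBigO_succ_sub {u : ℕ → ℝ} {L : ℝ} (hu : Tendsto u atTop (𝓝 L))
    (hΔ : (fun n => u (n + 1) - u n) =O[atTop] fun n => (n : ℝ)⁻¹ ^ 3) :
    (fun n => u n - L) =O[atTop] fun n => (n : ℝ)⁻¹ ^ 2 := by
  obtain ⟨C, hC, hbound⟩ := hΔ.exists_pos
  obtain ⟨N, hN⟩ := eventually_atTop.1 (hbound.bound.and (eventually_ge_atTop 2))
  -- `v k - v (k + 1) = C / ((k - 1) k (k + 1)) ≥ C / k ^ 3`, and `v n ≤ C / n ^ 2`.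
  set v : ℕ → ℝ := fun k => C / (2 * ((k : ℝ) - 1) * k)
  have hv : Tendsto v atTop (𝓝 0) :=
    tendsto_const_nhds.div_atTop <| (Tendsto.const_mul_atTop two_pos
      (tendsto_atTop_add_const_right _ _ tendsto_natCast_atTop_atTop)).atTop_mul_atTop₀
      tendsto_natCast_atTop_atTop
  have hstep : ∀ k, N ≤ k → |u (k + 1) - u k| ≤ v k - v (k + 1) := fun k hk => by
    obtain ⟨hk, hk2⟩ := hN k hk
    have hk1 : (0 : ℝ) < k - 1 := by
      have : (2 : ℝ) ≤ k := by exact_mod_cast hk2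
      linarith
    have hk0 : (0 : ℝ) < k := by linarith
    refine (Real.norm_eq_abs _ ▸ hk).trans ?_
    simp only [v, norm_pow, norm_inv, Real.norm_natCast, Nat.cast_succ, add_sub_cancel_right]
    rw [show C / (2 * ((k : ℝ) - 1) * k) - C / (2 * k * (k + 1))
      = C / (((k : ℝ) - 1) * k * (k + 1)) by field_simp; ring, inv_pow, ← div_eq_mul_inv]
    exact div_le_div_of_nonneg_left hC.le (by positivity) (by nlinarith)
  refine IsBigO.of_bound C ?_
  filter_upwards [eventually_ge_atTop N, eventually_ge_atTop 2] with n hn hn2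
  have hn2 : (2 : ℝ) ≤ n := by exact_mod_cast hn2
  refine (abs_sub_le_of_tendsto_of_abs_sub_succ_le hu hv hstep hn).trans ?_
  simp only [v, norm_pow, norm_inv, Real.norm_natCast]
  rw [inv_pow, ← div_eq_mul_inv]
  exact div_le_div_of_nonneg_left hC.le (by positivity) (by nlinarith)

theorem isBigO_inv_add_natCast (x : ℝ) :
    (fun n : ℕ => (x + n)⁻¹) =O[atTop] fun n => (n : ℝ)⁻¹ := by
  have : (fun n : ℕ => x + (n : ℝ)) ~[atTop] fun n => (n : ℝ) :=
    (isLittleO_const_left.2 <| Or.inr <|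
      tendsto_norm_atTop_atTop.comp tendsto_natCast_atTop_atTop).add_isEquivalent IsEquivalent.refl
  exact this.inv.isBigO

theorem eventually_add_natCast_ne_zero (x : ℝ) : ∀ᶠ n : ℕ in atTop, x + n ≠ 0 :=
  (tendsto_atTop_add_const_left _ x tendsto_natCast_atTop_atTop).eventually_ne_atTop 0

theorem isBigO_sub_of_isBigO_div_sub_one {α 𝕜 : Type*} [NormedField 𝕜] {l : Filter α}
    {f g w : α → 𝕜} {c : 𝕜} (hf : Tendsto f l (𝓝 c)) (hc : c ≠ 0)
    (h : (fun x => g x / f x - 1) =O[l] w) : (fun x => f x - g x) =O[l] w := by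
  refine ((hf.isBigO_one 𝕜).mul h).neg_left.congr' ?_ (.of_forall fun x => one_mul _)
  filter_upwards [hf.eventually_ne hc] with x hx
  field_simp
  ring

noncomputable def dingleApprox (a1 a2 s x : ℝ) : ℝ :=
  1 + (s + a1) * (s + a2) / (1 + s - x)

theorem tendsto_dingleApprox (a1 a2 s : ℝ) :
    Tendsto (fun n : ℕ => dingleApprox a1 a2 s n) atTop (𝓝 1) := by
  have hden : Tendsto (fun n : ℕ => 1 + s - n) atTop atBot :=
    tendsto_atBot_add_const_left _ (1 + s)
      (tendsto_neg_atTop_atBot.comp tendsto_natCast_atTop_atTop)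
  simpa [dingleApprox] using tendsto_const_nhds.add (tendsto_const_nhds.div_atBot hden)

theorem dingleApprox_succ_sub_mul {a1 a2 b1 s x : ℝ} (hs : s = b1 - a1 - a2)
    (hb : b1 + x ≠ 0) (ht : -s + x ≠ 0) (ht' : -s - 1 + x ≠ 0) :
    dingleApprox a1 a2 s (x + 1) -
        dingleApprox a1 a2 s x * ((a1 + x) * (a2 + x) / ((b1 + x) * (-s + x))) =
      (s + a1) * (s + a2) * (b1 + s + 1 + (s + a1) * (s + a2)) *
        ((b1 + x)⁻¹ * ((-s + x)⁻¹ * (-s - 1 + x)⁻¹)) := by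
  rw [dingleApprox, dingleApprox, show 1 + s - (x + 1) = -(-s + x) by ring,
    show 1 + s - x = -(-s - 1 + x) by ring]
  field_simp
  subst hs
  ring

theorem isBigO_dingleApprox_div_gammaRatio_succ_sub {a1 a2 b1 s : ℝ} (hs : s = b1 - a1 - a2) :
    (fun n : ℕ => dingleApprox a1 a2 s (n + 1 : ℕ) / gammaRatio a1 a2 b1 (-s) (n + 1) -
      dingleApprox a1 a2 s n / gammaRatio a1 a2 b1 (-s) n) =O[atTop]
      fun n => (n : ℝ)⁻¹ ^ 3 := by
  set g := gammaRatio a1 a2 b1 (-s)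
  have hg : Tendsto g atTop (𝓝 1) := tendsto_gammaRatio (by rw [hs]; ring)
  have hcube := ((isBigO_inv_add_natCast b1).mul ((isBigO_inv_add_natCast (-s)).mul
    (isBigO_inv_add_natCast (-s - 1)))).const_mul_left
    ((s + a1) * (s + a2) * (b1 + s + 1 + (s + a1) * (s + a2)))
  have hinv : (fun n => (g (n + 1))⁻¹) =O[atTop] fun _ => (1 : ℝ) :=
    ((hg.comp (tendsto_add_atTop_nat 1)).inv₀ one_ne_zero).isBigO_one ℝ
  refine (hcube.mul hinv).congr' ?_ (.of_forall fun n => by ring)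
  filter_upwards [eventually_add_natCast_ne_zero a1, eventually_add_natCast_ne_zero a2,
    eventually_add_natCast_ne_zero b1, eventually_add_natCast_ne_zero (-s),
    eventually_add_natCast_ne_zero (-s - 1), hg.eventually_ne one_ne_zero]
    with n ha1 ha2 hb ht ht' hgn
  have hsucc : g (n + 1) = g n * ((a1 + n) * (a2 + n) / ((b1 + n) * (-s + n))) :=
    gammaRatio_succ ha1 ha2 hb ht
  rw [Nat.cast_succ, ← dingleApprox_succ_sub_mul hs hb ht ht', hsucc]
  field_simp

theorem gamma_ratio_first_order (a1 a2 b1 s1 : ℝ) (hs : s1 = b1 - a1 - a2) :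
    (fun n : ℕ =>
        Real.Gamma (a1 + n) * Real.Gamma (a2 + n) /
            (Real.Gamma (b1 + n) * Real.Gamma (-s1 + n)) -
          (1 + (s1 + a1) * (s1 + a2) / (1 + s1 - n))) =O[atTop]
      fun n : ℕ => ((n : ℝ))⁻¹ ^ 2 := by
  have hg : Tendsto (gammaRatio a1 a2 b1 (-s1)) atTop (𝓝 1) :=
    tendsto_gammaRatio (by rw [hs]; ring)
  have hq : Tendsto (fun n : ℕ => dingleApprox a1 a2 s1 n / gammaRatio a1 a2 b1 (-s1) n) atTop
      (𝓝 1) := by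
    have := (tendsto_dingleApprox a1 a2 s1).div hg one_ne_zero
    rwa [div_one] at this
  change (fun n : ℕ => gammaRatio a1 a2 b1 (-s1) n - dingleApprox a1 a2 s1 n) =O[atTop] _
  exact isBigO_sub_of_isBigO_div_sub_one hg one_ne_zero
    (isBigO_sub_of_isBigO_succ_sub hq (isBigO_dingleApprox_div_gammaRatio_succ_sub hs))
end

section
/- For any integer m ≥ 0 and complex z with |z| < 1, (1-z)^m · log(1-z) = Σ_{n=1}^∞ c_n z^n, where for n > m the coefficient is c_n = -(1/n)(-1)^m Γ(1+m)Γ(n-m)/Γ(n) = -(1/n)(-1)^m m!(n-m-1)!/(n-1)!. -/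
/-!
Multiplying a power series `∑ aₙ zⁿ` with `a₀ = 0` by `1 - z` replaces its coefficients by the
differences `aₙ - aₙ₋₁`. Starting from `log (1 - z) = -∑ zⁿ / n` this gives the coefficients of
`(1 - z)ᵐ log (1 - z)` by a recursion in `m`, and for `n = m + 1 + k` the closed form
`(-1)ᵐ⁺¹ m! k! / n!` satisfies the same recursion.
-/

open scoped Nat

theorem HasSum.one_sub_mul_of_coeff_zero {R : Type*} [CommRing R] [TopologicalSpace R]
    [IsTopologicalRing R] {a : ℕ → R} {z s : R} (ha : a 0 = 0)
    (h : HasSum (fun n => a n * z ^ n) s) :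
    HasSum (fun n => (a n - a (n - 1)) * z ^ n) ((1 - z) * s) := by
  have hshift : HasSum (fun n => a (n - 1) * z ^ n) (z * s) := by
    refine (hasSum_nat_add_iff' 1).mp ?_
    simpa [ha, pow_succ, mul_comm, mul_left_comm] using h.mul_left z
  simpa [sub_mul] using h.sub hshift

/-- The junk values `1 / 0 = 0` and `0 - 1 = 0` make the constant coefficient vanish, as it
should. -/
noncomputable def logBinomCoeff : ℕ → ℕ → ℂ
  | 0, n => -(1 / n)
  | m + 1, n => logBinomCoeff m n - logBinomCoeff m (n - 1)

@[simp]
theorem logBinomCoeff_zero_right (m : ℕ) : logBinomCoeff m 0 = 0 := by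
  induction m with
  | zero => simp [logBinomCoeff]
  | succ m _ => simp [logBinomCoeff]

theorem hasSum_logBinomCoeff (m : ℕ) {z : ℂ} (hz : ‖z‖ < 1) :
    HasSum (fun n => logBinomCoeff m n * z ^ n) ((1 - z) ^ m * Complex.log (1 - z)) := by
  induction m with
  | zero =>
    simpa [logBinomCoeff, div_eq_inv_mul, mul_comm] using
      (Complex.hasSum_taylorSeries_neg_log hz).neg
  | succ m ih =>
    rw [_root_.pow_succ', mul_assoc]
    exact ih.one_sub_mul_of_coeff_zero (logBinomCoeff_zero_right m)

theorem logBinomCoeff_add_one_add (m k : ℕ) :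
    logBinomCoeff m (m + 1 + k) = (-1) ^ (m + 1) * m ! * k ! / (m + 1 + k) ! := by
  induction m generalizing k with
  | zero =>
    rw [zero_add, add_comm, Nat.factorial_succ, Nat.cast_mul]
    simp only [logBinomCoeff]
    field_simp [Nat.factorial_ne_zero]
    simp
  | succ m ih =>
    have hrec : logBinomCoeff (m + 1) (m + 1 + 1 + k) =
        logBinomCoeff m (m + 1 + (k + 1)) - logBinomCoeff m (m + 1 + k) := by
      simp only [logBinomCoeff]
      congr 2 <;> omega
    have hsucc : ((m + 1 + k + 1 : ℕ) : ℂ) ≠ 0 := Nat.cast_ne_zero.mpr (Nat.succ_ne_zero _)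
    rw [hrec, ih, ih, show m + 1 + (k + 1) = m + 1 + k + 1 by ring,
      show m + 1 + 1 + k = m + 1 + k + 1 by ring, Nat.factorial_succ (m + 1 + k),
      Nat.factorial_succ k, Nat.factorial_succ m]
    simp only [Nat.cast_mul]
    field_simp [Nat.factorial_ne_zero, hsucc]
    push_cast
    ring

theorem log_binomial_expansion (m : ℕ) :
    ∃ c : ℕ → ℂ,
      (∀ z : ℂ, ‖z‖ < 1 →
        HasSum (fun n : ℕ => c n * z ^ n) ((1 - z) ^ m * Complex.log (1 - z))) ∧
      ∀ n : ℕ, n > m →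
        c n = -(1 / n) * (-1) ^ m *
          ((m.factorial : ℂ) * ((n - m - 1).factorial : ℂ) / ((n - 1).factorial : ℂ)) := by
  refine ⟨logBinomCoeff m, fun z hz => hasSum_logBinomCoeff m hz, fun n hn => ?_⟩
  obtain ⟨k, rfl⟩ : ∃ k, n = m + 1 + k := ⟨n - (m + 1), by omega⟩
  rw [logBinomCoeff_add_one_add, show m + 1 + k - m - 1 = k by omega,
    show m + 1 + k - 1 = m + k by omega, show m + 1 + k = m + k + 1 by ring,
    Nat.factorial_succ, Nat.cast_mul]
  field_simp [Nat.factorial_ne_zero]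
  ring
end

section
/- For n > m ≥ 0 natural numbers, the coefficient c_n in the power-series expansion of (1-z)^m log(1-z) about z = 0 satisfies c_n = -(1/n) · (-1)^m · m! (n-m-1)! / (n-1)!. -/
/-!
Substituting `t = 1 - x` reduces the claim to the derivatives of `t ^ m * log t` at `t = 1`.
Since `(t ^ (m + 1) * log t)' = (m + 1) * t ^ m * log t + t ^ m` and the polynomial `t ^ m` is
killed by more than `m` differentiations, induction on `m`, starting from `log' = t⁻¹`, gives
`D^(m + k + 1) (t ^ m * log t) = (-1) ^ k * m! * k! / t ^ (k + 1)`.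
-/

open scoped Nat

namespace Real

theorem iteratedDeriv_succ_log (k : ℕ) (t : ℝ) :
    iteratedDeriv (k + 1) log t = (-1) ^ k * k ! / t ^ (k + 1) := by
  rw [iteratedDeriv_succ', deriv_log', iteratedDeriv_eq_iterate, iter_deriv_inv,
    show (-1 - k : ℤ) = -↑(k + 1) by push_cast; ring, zpow_neg, zpow_natCast, div_eq_mul_inv]

theorem deriv_pow_succ_mul_log (m : ℕ) {t : ℝ} (ht : t ≠ 0) :
    deriv (fun t => t ^ (m + 1) * log t) t = (m + 1) * (t ^ m * log t) + t ^ m := by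
  rw [((hasDerivAt_pow (m + 1) t).fun_mul (hasDerivAt_log ht)).deriv]
  field_simp
  push_cast
  ring

theorem iteratedDeriv_pow_mul_log (m k : ℕ) {t : ℝ} (ht : t ≠ 0) :
    iteratedDeriv (m + k + 1) (fun t => t ^ m * log t) t = (-1) ^ k * m ! * k ! / t ^ (k + 1) := by
  induction m generalizing t with
  | zero => simpa using iteratedDeriv_succ_log k t
  | succ m ih =>
    have hderiv : Set.EqOn (deriv fun t => t ^ (m + 1) * log t)
        (fun t => (m + 1) * (t ^ m * log t) + t ^ m) {0}ᶜ :=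
      fun t ht => deriv_pow_succ_mul_log m ht
    have hsmooth : ContDiffAt ℝ (m + k + 1 : ℕ) (fun t => (m + 1) * (t ^ m * log t)) t := by
      fun_prop (disch := assumption)
    rw [show m + 1 + k + 1 = m + k + 1 + 1 by ring, iteratedDeriv_succ',
      hderiv.iteratedDeriv_of_isOpen isOpen_compl_singleton _ ht,
      iteratedDeriv_fun_add hsmooth (by fun_prop), iteratedDeriv_const_mul_field, ih ht,
      iteratedDeriv_pow, Nat.descFactorial_eq_zero_iff_lt.mpr (by omega),
      Nat.factorial_succ]
    push_cast
    ring

end Real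

open Real

theorem taylor_coeff_log_binomial (m n : ℕ) (h : m < n) :
    iteratedDeriv n (fun x : ℝ => (1 - x) ^ m * Real.log (1 - x)) 0 / n.factorial =
      -(1 / n) * (-1) ^ m *
        ((m.factorial : ℝ) * ((n - m - 1).factorial : ℝ) / ((n - 1).factorial : ℝ)) := by
  obtain ⟨k, rfl⟩ := Nat.exists_eq_add_of_lt h
  have hreflect := congrFun (iteratedDeriv_comp_const_sub (m + k + 1) (fun t => t ^ m * log t) 1) 0
  rw [sub_zero, iteratedDeriv_pow_mul_log m k one_ne_zero, one_pow, div_one, smul_eq_mul]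
    at hreflect
  have hsign : (-1 : ℝ) ^ (m + k + 1) * (-1) ^ k = -(-1) ^ m := by
    rw [← pow_add, show m + k + 1 + k = m + 1 + 2 * k by ring, pow_add, pow_mul]
    norm_num [pow_succ]
  rw [hreflect, ← mul_assoc, ← mul_assoc, hsign, show m + k + 1 - m - 1 = k by omega,
    Nat.add_sub_cancel, Nat.factorial_succ]
  push_cast
  field_simp
end

section
/- Equality of two representations of A_k^{(3)}: for complex parameters a3, a4, b1, b2, b3 and natural k, Σ_{k2=0}^k (b3+b2-a4-a3+k2)_{k-k2} (b1-a3)_{k-k2} (b3-a4)_{k2} (b2-a4)_{k2} / ((k-k2)! k2!) = [(b1+b3-a3-a4)_k (b2+b3-a3-a4)_k / k!] · 3F2(b3-a3, b3-a4, -k; b1+b3-a3-a4, b2+b3-a3-a4; 1). -/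
open Finset

noncomputable def P (n : ℕ) (a : ℂ) : ℂ := (ascPochhammer ℂ n).eval a
lemma P_def (n : ℕ) (a : ℂ) : (ascPochhammer ℂ n).eval a = P n a := rfl
lemma P_zero (a : ℂ) : P 0 a = 1 := by simp [P]
lemma P_succ (n : ℕ) (a : ℂ) : P (n+1) a = P n a * (a + n) := ascPochhammer_succ_eval n a

lemma P_split (m n : ℕ) (a : ℂ) : P (m + n) a = P m a * P n (a + m) := by
  have := ascPochhammer_mul ℂ m n
  have h2 := congrArg (Polynomial.eval a) this
  simpa [P, Polynomial.eval_comp] using h2.symm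

lemma fac_ne (n : ℕ) : ((n.factorial : ℂ)) ≠ 0 := by exact_mod_cast n.factorial_ne_zero

lemma P_negk (k : ℕ) : ∀ j ≤ k, P j (-(k:ℂ)) = (-1)^j * k.factorial / (k-j).factorial := by
  intro j hj
  induction j with
  | zero => simp [P_zero, div_self (fac_ne k)]
  | succ j ih =>
    have hj' : j ≤ k := Nat.le_of_succ_le hj
    rw [P_succ, ih hj']
    have hfac : ((k - j).factorial : ℂ) = ((k - (j+1)).factorial : ℂ) * (((k:ℂ)) - j) := by
      have hkj : (k - j : ℕ) = (k - (j+1)) + 1 := by omega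
      rw [hkj, Nat.factorial_succ]
      have : ((k - (j+1) : ℕ) : ℂ) = (k:ℂ) - (j+1) := by
        rw [Nat.cast_sub (by omega : j+1 ≤ k)]; push_cast; ring
      push_cast [this]; ring
    rw [hfac]
    have h1 : ((k:ℂ)) - j ≠ 0 := by
      have : ((k - j : ℕ) : ℂ) = (k:ℂ) - j := by rw [Nat.cast_sub hj']
      rw [← this]
      exact_mod_cast Nat.sub_ne_zero_of_lt hj
    field_simp [h1, fac_ne]
    ring

lemma P_negk_mul (k j : ℕ) (hj : j ≤ k) :
    P j (-(k:ℂ)) * (((k-j).factorial : ℂ)) = (-1)^j * (k.factorial : ℂ) := by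
  rw [P_negk k j hj, div_mul_eq_mul_div, mul_div_assoc, div_self (fac_ne (k-j)), mul_one]

lemma P_vandermonde (n : ℕ) (a b : ℂ) :
    P n (a + b) = ∑ m ∈ range (n+1), (n.choose m : ℂ) * P m a * P (n-m) b := by
  induction n with
  | zero => simp [P_zero]
  | succ n ih =>
    rw [P_succ, ih, sum_mul]
    have key : ∀ m ∈ range (n+1),
        (n.choose m : ℂ) * P m a * P (n-m) b * (a + b + n)
        = (n.choose m : ℂ) * P (m+1) a * P (n-m) b + (n.choose m : ℂ) * P m a * P (n-m+1) b := by
      intro m hm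
      rw [mem_range] at hm
      have hm' : m ≤ n := by omega
      have hcast : ((n - m : ℕ) : ℂ) = (n : ℂ) - m := by rw [Nat.cast_sub hm']
      rw [P_succ m a, P_succ (n-m) b, hcast]
      ring
    rw [sum_congr rfl key, sum_add_distrib]
    -- RHS: split off first term
    rw [sum_range_succ' (fun m => ((n+1).choose m : ℂ) * P m a * P (n+1-m) b) (n+1)]
    have h0 : ((n+1).choose 0 : ℂ) * P 0 a * P (n+1-0) b = P (n+1) b := by
      simp [P_zero]
    rw [h0]
    have hps : ∀ m ∈ range (n+1), ((n+1).choose (m+1) : ℂ) * P (m+1) a * P (n+1-(m+1)) b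
        = (n.choose m : ℂ) * P (m+1) a * P (n-m) b + (n.choose (m+1) : ℂ) * P (m+1) a * P (n-m) b := by
      intro m hm
      rw [Nat.choose_succ_succ, Nat.succ_sub_succ]
      push_cast; ring
    rw [sum_congr rfl hps, sum_add_distrib]
    have hB : ∑ m ∈ range (n+1), (n.choose m : ℂ) * P m a * P (n-m+1) b
        = (∑ m ∈ range (n+1), (n.choose (m+1) : ℂ) * P (m+1) a * P (n-m) b) + P (n+1) b := by
      -- remains: Σ C(n,m) P m a P(n-m+1) b = Σ C(n,m+1) P(m+1) a P(n-m) b + P(n+1) b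
      rw [sum_range_succ' (fun m => (n.choose m : ℂ) * P m a * P (n-m+1) b) n]
      have h0' : (n.choose 0 : ℂ) * P 0 a * P (n-0+1) b = P (n+1) b := by simp [P_zero]
      rw [h0']
      congr 1
      rw [sum_range_succ]
      simp only [Nat.choose_succ_self, Nat.cast_zero, zero_mul, add_zero]
      apply sum_congr rfl
      intro m hm
      rw [mem_range] at hm
      congr 2
      omega
    rw [hB]
    ring

lemma tri_reindex (n : ℕ) (f : ℕ → ℕ → ℂ) :
    ∑ j ∈ range (n+1), ∑ m ∈ range (n - j + 1), f j m
      = ∑ s ∈ range (n+1), ∑ j ∈ range (s + 1), f j (s - j) := by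
  rw [Finset.sum_range_diag_flip (n+1) f]
  apply sum_congr rfl
  intro j hj
  rw [mem_range] at hj
  have : n + 1 - j = n - j + 1 := by omega
  rw [this]

lemma tri_swap (n : ℕ) (f : ℕ → ℕ → ℂ) :
    ∑ j ∈ range (n+1), ∑ m ∈ range (n - j + 1), f j m
      = ∑ m ∈ range (n+1), ∑ j ∈ range (n - m + 1), f j m := by
  rw [tri_reindex n f, tri_reindex n (fun m j => f j m)]
  apply sum_congr rfl
  intro s hs
  rw [← Finset.sum_range_reflect]
  apply sum_congr rfl
  intro j hj
  rw [mem_range] at hj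
  have h1 : s + 1 - 1 - j = s - j := by omega
  have h2 : s - (s - j) = j := by omega
  rw [h1, h2]

lemma choose_tri {s j m : ℕ} (h : j + m ≤ s) :
    s.choose j * (s - j).choose m = s.choose m * (s - m).choose j := by
  have hj : j ≤ s := by omega
  have hm : m ≤ s := by omega
  have hmj : m ≤ s - j := by omega
  have hjm : j ≤ s - m := by omega
  have e1 : s.choose j * (s-j).choose m * (j.factorial * m.factorial * (s-j-m).factorial)
      = s.factorial := by
    have a1 := Nat.choose_mul_factorial_mul_factorial hmj
    have a2 := Nat.choose_mul_factorial_mul_factorial hj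
    calc s.choose j * (s-j).choose m * (j.factorial * m.factorial * (s-j-m).factorial)
        = s.choose j * j.factorial * ((s-j).choose m * m.factorial * (s-j-m).factorial) := by ring
      _ = s.choose j * j.factorial * (s-j).factorial := by rw [show s-j-m = s-j-m from rfl]; rw [a1]
      _ = s.factorial := by exact a2
  have e2 : s.choose m * (s-m).choose j * (j.factorial * m.factorial * (s-j-m).factorial)
      = s.factorial := by
    have a1 := Nat.choose_mul_factorial_mul_factorial hjm
    have a2 := Nat.choose_mul_factorial_mul_factorial hm
    have hh : s - m - j = s - j - m := by omega
    calc s.choose m * (s-m).choose j * (j.factorial * m.factorial * (s-j-m).factorial)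
        = s.choose m * m.factorial * ((s-m).choose j * j.factorial * (s-m-j).factorial) := by
          rw [hh]; ring
      _ = s.choose m * m.factorial * (s-m).factorial := by rw [a1]
      _ = s.factorial := by exact a2
  have hpos : 0 < j.factorial * m.factorial * (s-j-m).factorial :=
    Nat.mul_pos (Nat.mul_pos j.factorial_pos m.factorial_pos) (s-j-m).factorial_pos
  exact Nat.eq_of_mul_eq_mul_right hpos (e1.trans e2.symm)

lemma key_V (s : ℕ) (x v : ℂ) :
    ∑ j ∈ range (s+1), (-1:ℂ)^j * (s.choose j : ℂ) * P j x * P (s-j) (v + x + j) = P s v := by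
  have step1 : ∀ j ∈ range (s+1),
      (-1:ℂ)^j * (s.choose j : ℂ) * P j x * P (s-j) (v + x + j)
      = ∑ m ∈ range (s - j + 1),
          (-1:ℂ)^j * (s.choose j : ℂ) * ((s-j).choose m : ℂ) * P m v * (P j x * P (s-j-m) (x + j)) := by
    intro j hj
    rw [mem_range] at hj
    have : P (s-j) (v + x + j) = P (s-j) (v + (x + (j:ℂ))) := by ring_nf
    rw [this, P_vandermonde (s-j) v (x + j)]
    rw [mul_sum]
    apply sum_congr rfl
    intro m hm
    ring
  rw [sum_congr rfl step1, tri_swap s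
    (fun j m => (-1:ℂ)^j * (s.choose j : ℂ) * ((s-j).choose m : ℂ) * P m v * (P j x * P (s-j-m) (x + j)))]
  have step2 : ∀ m ∈ range (s+1),
      ∑ j ∈ range (s - m + 1),
          (-1:ℂ)^j * (s.choose j : ℂ) * ((s-j).choose m : ℂ) * P m v * (P j x * P (s-j-m) (x + j))
      = (s.choose m : ℂ) * P m v * P (s-m) x *
          ∑ j ∈ range (s - m + 1), (-1:ℂ)^j * ((s-m).choose j : ℂ) := by
    intro m hm
    rw [mem_range] at hm
    rw [mul_sum]
    apply sum_congr rfl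
    intro j hj
    rw [mem_range] at hj
    have hjm : j + m ≤ s := by omega
    have hsp : P j x * P (s-j-m) (x + j) = P (s-m) x := by
      have : s - m = j + (s-j-m) := by omega
      rw [this, P_split]
    have hch : (s.choose j : ℂ) * ((s-j).choose m : ℂ) = (s.choose m : ℂ) * ((s-m).choose j : ℂ) := by
      exact_mod_cast congrArg (Nat.cast : ℕ → ℂ) (choose_tri hjm)
    calc (-1:ℂ)^j * (s.choose j : ℂ) * ((s-j).choose m : ℂ) * P m v * (P j x * P (s-j-m) (x + j))
        = ((s.choose j : ℂ) * ((s-j).choose m : ℂ)) * ((-1:ℂ)^j * P m v * (P j x * P (s-j-m) (x + j))) := by ring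
      _ = ((s.choose m : ℂ) * ((s-m).choose j : ℂ)) * ((-1:ℂ)^j * P m v * P (s-m) x) := by rw [hch, hsp]
      _ = (s.choose m : ℂ) * P m v * P (s-m) x * ((-1:ℂ)^j * ((s-m).choose j : ℂ)) := by ring
  rw [sum_congr rfl step2]
  have alt : ∀ m ∈ range (s+1),
      ∑ j ∈ range (s - m + 1), (-1:ℂ)^j * ((s-m).choose j : ℂ) = if s - m = 0 then 1 else 0 := by
    intro m _
    have := Int.alternating_sum_range_choose (n := s - m)
    have hc := congrArg (Int.cast : ℤ → ℂ) this
    push_cast at hc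
    rw [← hc]
  have final : ∑ m ∈ range (s+1),
      (s.choose m : ℂ) * P m v * P (s-m) x * (if s - m = 0 then 1 else 0) = P s v := by
    rw [Finset.sum_eq_single s]
    · simp [P_zero]
    · intro m hm hms
      rw [mem_range] at hm
      have : ¬ (s - m = 0) := by omega
      simp [this]
    · intro h; simp at h
  rw [← final]
  apply sum_congr rfl
  intro m hm
  rw [alt m hm]


lemma main_general (k : ℕ) (u v x y : ℂ)
    (h1 : ∀ j ≤ k, P j (u + y) ≠ 0) (h2 : ∀ j ≤ k, P j (v + x) ≠ 0) :
    ∑ s ∈ range (k + 1),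
        P (k - s) (v + x + s) * P (k - s) u * P s y * P s v / (((k - s).factorial : ℂ) * (s.factorial : ℂ))
      = P k (u + y) * P k (v + x) / (k.factorial : ℂ) *
          ∑ j ∈ range (k + 1),
            P j x * P j y * P j (-(k : ℂ)) / (P j (u + y) * P j (v + x) * (j.factorial : ℂ)) := by
  symm
  rw [mul_sum]
  calc
    ∑ j ∈ range (k + 1), P k (u + y) * P k (v + x) / (k.factorial : ℂ) *
        (P j x * P j y * P j (-(k : ℂ)) / (P j (u + y) * P j (v + x) * (j.factorial : ℂ)))
      = ∑ j ∈ range (k + 1), (-1:ℂ)^j * P j x * P j y * P (k-j) (u + y + j) * P (k-j) (v + x + j)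
          / ((j.factorial : ℂ) * ((k-j).factorial : ℂ)) := by
        apply sum_congr rfl
        intro j hj
        rw [mem_range] at hj
        have hjk : j ≤ k := by omega
        have e1 : P k (u + y) = P j (u + y) * P (k-j) (u + y + j) := by
          have := P_split j (k-j) (u + y)
          rwa [show j + (k - j) = k from by omega] at this
        have e2 : P k (v + x) = P j (v + x) * P (k-j) (v + x + j) := by
          have := P_split j (k-j) (v + x)
          rwa [show j + (k - j) = k from by omega] at this
        have hneg := P_negk_mul k j hjk
        rw [div_mul_div_comm, div_eq_div_iff
          (mul_ne_zero (fac_ne k) (mul_ne_zero (mul_ne_zero (h1 j hjk) (h2 j hjk)) (fac_ne j)))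
          (mul_ne_zero (fac_ne j) (fac_ne (k-j)))]
        rw [e1, e2]
        linear_combination (P j (u + y) * P j (v + x) * P (k-j) (u + y + j) * P (k-j) (v + x + j)
          * P j x * P j y * (j.factorial : ℂ)) * hneg
    _ = ∑ j ∈ range (k + 1), ∑ m ∈ range (k - j + 1),
          (-1:ℂ)^j * P j x * P (j+m) y * P (k-j-m) u * P (k-j) (v + x + j)
            / ((j.factorial : ℂ) * (m.factorial : ℂ) * ((k-j-m).factorial : ℂ)) := by
        apply sum_congr rfl
        intro j hj
        rw [mem_range] at hj
        have hjk : j ≤ k := by omega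
        have hrw : u + y + (j:ℂ) = (y + j) + u := by ring
        rw [hrw, P_vandermonde (k-j) (y + (j:ℂ)) u, Finset.mul_sum, Finset.sum_mul, Finset.sum_div]
        apply sum_congr rfl
        intro m hm
        rw [mem_range] at hm
        have hm' : m ≤ k - j := by omega
        have hc : (((k-j).choose m : ℕ) : ℂ) * (m.factorial : ℂ) * ((k-j-m).factorial : ℂ)
            = ((k-j).factorial : ℂ) := by
          exact_mod_cast congrArg (Nat.cast : ℕ → ℂ) (Nat.choose_mul_factorial_mul_factorial hm')
        rw [P_split j m y]
        rw [div_eq_div_iff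
          (mul_ne_zero (fac_ne j) (fac_ne (k-j)))
          (mul_ne_zero (mul_ne_zero (fac_ne j) (fac_ne m)) (fac_ne (k-j-m)))]
        linear_combination ((-1:ℂ)^j * P j x * P j y * P m (y + j) * P (k-j-m) u
          * P (k-j) (v + x + j) * (j.factorial : ℂ)) * hc
    _ = ∑ s ∈ range (k + 1), ∑ j ∈ range (s + 1),
          (-1:ℂ)^j * P j x * P (j+(s-j)) y * P (k-j-(s-j)) u * P (k-j) (v + x + j)
            / ((j.factorial : ℂ) * ((s-j).factorial : ℂ) * ((k-j-(s-j)).factorial : ℂ)) := by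
        exact tri_reindex k (fun j m => (-1:ℂ)^j * P j x * P (j+m) y * P (k-j-m) u * P (k-j) (v + x + j)
            / ((j.factorial : ℂ) * (m.factorial : ℂ) * ((k-j-m).factorial : ℂ)))
    _ = ∑ s ∈ range (k + 1),
          P (k - s) (v + x + s) * P (k - s) u * P s y * P s v
            / (((k - s).factorial : ℂ) * (s.factorial : ℂ)) := by
        apply sum_congr rfl
        intro s hs
        rw [mem_range] at hs
        have hsk : s ≤ k := by omega
        have step : ∀ j ∈ range (s+1),
            (-1:ℂ)^j * P j x * P (j+(s-j)) y * P (k-j-(s-j)) u * P (k-j) (v + x + j)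
              / ((j.factorial : ℂ) * ((s-j).factorial : ℂ) * ((k-j-(s-j)).factorial : ℂ))
            = (P s y * P (k-s) u * P (k-s) (v + x + s) / ((s.factorial : ℂ) * ((k-s).factorial : ℂ)))
              * ((-1:ℂ)^j * (s.choose j : ℂ) * P j x * P (s-j) (v + x + j)) := by
          intro j hj
          rw [mem_range] at hj
          have hjs : j ≤ s := by omega
          rw [show j + (s - j) = s from by omega, show k - j - (s - j) = k - s from by omega]
          have esplit : P (k-j) (v + x + j) = P (s-j) (v + x + j) * P (k-s) (v + x + s) := by
            have := P_split (s-j) (k-s) (v + x + (j:ℂ))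
            rw [show (s-j) + (k-s) = k - j from by omega] at this
            rw [this]
            congr 1
            rw [Nat.cast_sub hjs]
            ring
          rw [esplit]
          have hc2 : ((s.choose j : ℕ) : ℂ) * (j.factorial : ℂ) * ((s-j).factorial : ℂ)
              = (s.factorial : ℂ) := by
            exact_mod_cast congrArg (Nat.cast : ℕ → ℂ) (Nat.choose_mul_factorial_mul_factorial hjs)
          rw [div_mul_eq_mul_div, div_eq_div_iff
            (mul_ne_zero (mul_ne_zero (fac_ne j) (fac_ne (s-j))) (fac_ne (k-s)))
            (mul_ne_zero (fac_ne s) (fac_ne (k-s)))]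
          linear_combination (-((-1:ℂ)^j * P j x * P s y * P (k-s) u * P (k-s) (v + x + s)
            * P (s-j) (v + x + j) * ((k-s).factorial : ℂ))) * hc2
        rw [sum_congr rfl step, ← mul_sum, key_V s x v]
        rw [div_mul_eq_mul_div, div_eq_div_iff
          (mul_ne_zero (fac_ne s) (fac_ne (k-s)))
          (mul_ne_zero (fac_ne (k-s)) (fac_ne s))]
        ring

theorem A3_representations (k : ℕ) (a3 a4 b1 b2 b3 : ℂ)
    (h1 : ∀ j ≤ k, (ascPochhammer ℂ j).eval (b1 + b3 - a3 - a4) ≠ 0)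
    (h2 : ∀ j ≤ k, (ascPochhammer ℂ j).eval (b2 + b3 - a3 - a4) ≠ 0) :
    ∑ k2 ∈ range (k + 1),
        (ascPochhammer ℂ (k - k2)).eval (b3 + b2 - a4 - a3 + k2) *
            (ascPochhammer ℂ (k - k2)).eval (b1 - a3) *
            (ascPochhammer ℂ k2).eval (b3 - a4) * (ascPochhammer ℂ k2).eval (b2 - a4) /
          (((k - k2).factorial : ℂ) * (k2.factorial : ℂ)) =
      (ascPochhammer ℂ k).eval (b1 + b3 - a3 - a4) *
          (ascPochhammer ℂ k).eval (b2 + b3 - a3 - a4) / (k.factorial : ℂ) *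
        ∑ j ∈ range (k + 1),
          (ascPochhammer ℂ j).eval (b3 - a3) * (ascPochhammer ℂ j).eval (b3 - a4) *
              (ascPochhammer ℂ j).eval (-(k : ℂ)) /
            ((ascPochhammer ℂ j).eval (b1 + b3 - a3 - a4) *
              (ascPochhammer ℂ j).eval (b2 + b3 - a3 - a4) * (j.factorial : ℂ)) := by
  have e1 : b1 + b3 - a3 - a4 = (b1 - a3) + (b3 - a4) := by ring
  have e2 : b2 + b3 - a3 - a4 = (b2 - a4) + (b3 - a3) := by ring
  have h1' : ∀ j ≤ k, P j ((b1 - a3) + (b3 - a4)) ≠ 0 := by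
    intro j hj
    show (ascPochhammer ℂ j).eval ((b1 - a3) + (b3 - a4)) ≠ 0
    rw [← e1]; exact h1 j hj
  have h2' : ∀ j ≤ k, P j ((b2 - a4) + (b3 - a3)) ≠ 0 := by
    intro j hj
    show (ascPochhammer ℂ j).eval ((b2 - a4) + (b3 - a3)) ≠ 0
    rw [← e2]; exact h2 j hj
  have main := main_general k (b1 - a3) (b2 - a4) (b3 - a3) (b3 - a4) h1' h2'
  simp only [P_def, e1, e2]
  rw [← main]
  apply sum_congr rfl
  intro k2 hk2
  congr 2
  · congr 1
    ring
end

section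
/- Equality of the two terminating-3F2 representations (16) and (17) of A_k^{(3)}: [(b3+b2-a4-a3)_k (b1-a3)_k / k!] · 3F2(b3-a4, b2-a4, -k; b3+b2-a4-a3, 1+a3-b1-k; 1) = [(b1+b3-a3-a4)_k (b2+b3-a3-a4)_k / k!] · 3F2(b3-a3, b3-a4, -k; b1+b3-a3-a4, b2+b3-a3-a4; 1) for all natural k and generic complex parameters. -/
/-!
Put x = b₃ - a₄, y = b₂ - a₄, z = b₃ - a₃, w = b₁ - a₃. Cancelling the lower parameters against
the prefactors turns the two sides into the polynomial sums
`(1/k!) ∑ⱼ C(k,j) (x)ⱼ (y)ⱼ (y+z+j)ₖ₋ⱼ (w)ₖ₋ⱼ` and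
`(1/k!) ∑ⱼ (-1)ʲ C(k,j) (z)ⱼ (x)ⱼ (w+x+j)ₖ₋ⱼ (y+z+j)ₖ₋ⱼ`.
Expanding `(y+z+j)ₖ₋ⱼ` by Chu–Vandermonde and regrouping by `m = j + i`, the inner sums collapse
by Chu–Vandermonde again (in its alternating form on the right), and after `m ↦ k - m` both sides
become `∑ₘ C(k,m) (y)ₘ (z)ₖ₋ₘ (w)ₖ₋ₘ (x+w+k-m)ₘ`.
-/

open Finset Polynomial

theorem sum_range_sum_range_sub_comm {M : Type*} [AddCommMonoid M] (k : ℕ) (f : ℕ → ℕ → M) :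
    ∑ j ∈ range (k + 1), ∑ i ∈ range (k - j + 1), f j i =
      ∑ m ∈ range (k + 1), ∑ j ∈ range (m + 1), f j (m - j) := by
  have hshift : ∀ j ∈ range (k + 1),
      ∑ i ∈ range (k - j + 1), f j i = ∑ m ∈ Ico j (k + 1), f j (m - j) := by
    intro j hj
    rw [sum_Ico_eq_sum_range, show k + 1 - j = k - j + 1 by grind]
    simp
  rw [sum_congr rfl hshift, ← Nat.Ico_zero_eq_range, sum_Ico_Ico_comm]
  simp only [Nat.Ico_zero_eq_range]

section Pochhammer

variable {R : Type*}

theorem ascPochhammer_eval_add_nat [CommSemiring R] (m n : ℕ) (x : R) :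
    (ascPochhammer R (m + n)).eval x =
      (ascPochhammer R m).eval x * (ascPochhammer R n).eval (x + m) := by
  rw [← ascPochhammer_mul, eval_mul, eval_comp, eval_add, eval_X, eval_natCast]

theorem ascPochhammer_eval_add [CommSemiring R] (n : ℕ) (a b : R) :
    (ascPochhammer R n).eval (a + b) = ∑ i ∈ range (n + 1),
      (n.choose i : R) * ((ascPochhammer R i).eval a * (ascPochhammer R (n - i)).eval b) := by
  induction n with
  | zero => simp
  | succ n ih =>
    rw [sum_choose_succ_mul (fun i j ↦ (ascPochhammer R i).eval a * (ascPochhammer R j).eval b),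
      ascPochhammer_succ_eval, ih, sum_mul, ← sum_add_distrib]
    refine sum_congr rfl fun i hi ↦ ?_
    obtain ⟨d, rfl⟩ := Nat.exists_eq_add_of_le (Nat.lt_succ_iff.mp (mem_range.mp hi))
    rw [show i + d + 1 - i = d + 1 by omega, Nat.add_sub_cancel_left, ascPochhammer_succ_eval,
      ascPochhammer_succ_eval]
    push_cast
    ring

theorem ascPochhammer_eval_neg [CommRing R] (n : ℕ) (x : R) :
    (ascPochhammer R n).eval (-x) = (-1) ^ n * (ascPochhammer R n).eval (x - n + 1) := by
  rw [ascPochhammer_eval_neg_eq_descPochhammer, descPochhammer_eval_eq_ascPochhammer]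

theorem ascPochhammer_eval_neg_natCast [CommRing R] (k j : ℕ) :
    (ascPochhammer R j).eval (-(k : R)) = (-1) ^ j * j.factorial * k.choose j := by
  rw [ascPochhammer_eval_neg_eq_descPochhammer, descPochhammer_eval_eq_descFactorial,
    Nat.descFactorial_eq_factorial_mul_choose, Nat.cast_mul, mul_assoc]

theorem sum_neg_one_pow_choose_mul_ascPochhammer_eval [CommRing R] (m : ℕ) (x a : R) :
    ∑ j ∈ range (m + 1), (-1) ^ j * (m.choose j : R) *
      ((ascPochhammer R j).eval x * (ascPochhammer R (m - j)).eval (a + j)) =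
        (ascPochhammer R m).eval (a - x) := by
  rw [← neg_sub, ascPochhammer_eval_neg, show x - a - m + 1 = x + (1 - a - m) by ring,
    ascPochhammer_eval_add, mul_sum]
  refine sum_congr rfl fun j hj ↦ ?_
  have hjm : j ≤ m := Nat.lt_succ_iff.mp (mem_range.mp hj)
  have hreflect : (ascPochhammer R (m - j)).eval (1 - a - m) =
      (-1) ^ (m - j) * (ascPochhammer R (m - j)).eval (a + j) := by
    rw [show 1 - a - m = -(a + m - 1) by ring, ascPochhammer_eval_neg, Nat.cast_sub hjm]
    ring_nf
  have hsign : (-1 : R) ^ m * (-1) ^ (m - j) = (-1) ^ j := by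
    rw [← pow_add, show m + (m - j) = 2 * (m - j) + j by omega, pow_add, pow_mul]
    norm_num
  rw [hreflect, ← hsign]
  ring

theorem sum_choose_mul_ascPochhammer_eval_add_mul [CommSemiring R] (k : ℕ) (y z : R)
    (F : ℕ → R) :
    ∑ j ∈ range (k + 1), (k.choose j : R) * (ascPochhammer R j).eval y *
        (ascPochhammer R (k - j)).eval (y + j + z) * F j =
      ∑ m ∈ range (k + 1), (k.choose m : R) * (ascPochhammer R m).eval y *
        (ascPochhammer R (k - m)).eval z * ∑ j ∈ range (m + 1), (m.choose j : R) * F j := by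
  have hexpand : ∀ j ∈ range (k + 1), (k.choose j : R) * (ascPochhammer R j).eval y *
        (ascPochhammer R (k - j)).eval (y + j + z) * F j =
      ∑ i ∈ range (k - j + 1), ((k.choose j * (k - j).choose i : ℕ) : R) *
        (ascPochhammer R (j + i)).eval y * (ascPochhammer R (k - j - i)).eval z * F j := by
    intro j _
    rw [ascPochhammer_eval_add, mul_sum, sum_mul]
    refine sum_congr rfl fun i _ ↦ ?_
    rw [ascPochhammer_eval_add_nat]
    push_cast
    ring
  rw [sum_congr rfl hexpand, sum_range_sum_range_sub_comm]
  refine sum_congr rfl fun m hm ↦ ?_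
  rw [mul_sum]
  refine sum_congr rfl fun j hj ↦ ?_
  have hmk : m ≤ k := Nat.lt_succ_iff.mp (mem_range.mp hm)
  have hjm : j ≤ m := Nat.lt_succ_iff.mp (mem_range.mp hj)
  rw [← Nat.choose_mul hjm, show j + (m - j) = m by omega, show k - j - (m - j) = k - m by omega]
  push_cast
  ring

theorem sum_choose_mul_ascPochhammer_eval_mul_ascPochhammer_eval [CommSemiring R] {m k : ℕ}
    (hmk : m ≤ k) (x w : R) :
    ∑ j ∈ range (m + 1), (m.choose j : R) *
      ((ascPochhammer R j).eval x * (ascPochhammer R (k - j)).eval w) =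
        (ascPochhammer R (k - m)).eval w * (ascPochhammer R m).eval (x + (w + (k - m : ℕ))) := by
  rw [ascPochhammer_eval_add, mul_sum]
  refine sum_congr rfl fun j hj ↦ ?_
  have hjm : j ≤ m := Nat.lt_succ_iff.mp (mem_range.mp hj)
  rw [show k - j = k - m + (m - j) by omega, ascPochhammer_eval_add_nat]
  ring

theorem sum_neg_one_pow_choose_mul_ascPochhammer_eval_mul_ascPochhammer_eval [CommRing R]
    {m k : ℕ} (hmk : m ≤ k) (x a : R) :
    ∑ j ∈ range (m + 1), (m.choose j : R) *
      ((-1) ^ j * (ascPochhammer R j).eval x * (ascPochhammer R (k - j)).eval (a + j)) =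
        (ascPochhammer R (k - m)).eval (a + m) * (ascPochhammer R m).eval (a - x) := by
  rw [← sum_neg_one_pow_choose_mul_ascPochhammer_eval, mul_sum]
  refine sum_congr rfl fun j hj ↦ ?_
  have hjm : j ≤ m := Nat.lt_succ_iff.mp (mem_range.mp hj)
  rw [show k - j = m - j + (k - m) by omega, ascPochhammer_eval_add_nat, Nat.cast_sub hjm,
    add_assoc a, add_sub_cancel]
  ring

theorem sum_choose_ascPochhammer_eq_sum_neg_one_pow [CommRing R] (k : ℕ) (x y z w : R) :
    ∑ j ∈ range (k + 1), (k.choose j : R) * (ascPochhammer R j).eval x *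
        (ascPochhammer R j).eval y * (ascPochhammer R (k - j)).eval (y + z + j) *
          (ascPochhammer R (k - j)).eval w =
      ∑ j ∈ range (k + 1), (-1) ^ j * (k.choose j : R) * (ascPochhammer R j).eval z *
        (ascPochhammer R j).eval x * (ascPochhammer R (k - j)).eval (w + x + j) *
          (ascPochhammer R (k - j)).eval (y + z + j) := by
  calc _ = ∑ j ∈ range (k + 1), (k.choose j : R) * (ascPochhammer R j).eval y *
          (ascPochhammer R (k - j)).eval (y + j + z) *
            ((ascPochhammer R j).eval x * (ascPochhammer R (k - j)).eval w) := by
        refine sum_congr rfl fun j _ ↦ ?_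
        rw [add_right_comm]
        ring
    _ = ∑ m ∈ range (k + 1), (k.choose m : R) * (ascPochhammer R m).eval y *
          (ascPochhammer R (k - m)).eval z * ((ascPochhammer R (k - m)).eval w *
            (ascPochhammer R m).eval (x + (w + (k - m : ℕ)))) := by
        rw [sum_choose_mul_ascPochhammer_eval_add_mul]
        refine sum_congr rfl fun m hm ↦ ?_
        rw [sum_choose_mul_ascPochhammer_eval_mul_ascPochhammer_eval
          (Nat.lt_succ_iff.mp (mem_range.mp hm))]
    _ = ∑ m ∈ range (k + 1), (k.choose m : R) * (ascPochhammer R m).eval z *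
          (ascPochhammer R (k - m)).eval y * ((ascPochhammer R (k - m)).eval (w + x + m) *
            (ascPochhammer R m).eval (w + x - x)) := by
        rw [← sum_range_reflect]
        refine sum_congr rfl fun m hm ↦ ?_
        have hmk : m ≤ k := Nat.lt_succ_iff.mp (mem_range.mp hm)
        rw [add_tsub_cancel_right, Nat.sub_sub_self hmk, Nat.choose_symm hmk, add_sub_cancel_right,
          add_left_comm, add_assoc]
        ring
    _ = ∑ j ∈ range (k + 1), (k.choose j : R) * (ascPochhammer R j).eval z *
          (ascPochhammer R (k - j)).eval (z + j + y) *
            ((-1) ^ j * (ascPochhammer R j).eval x *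
              (ascPochhammer R (k - j)).eval (w + x + j)) := by
        rw [sum_choose_mul_ascPochhammer_eval_add_mul]
        refine sum_congr rfl fun m hm ↦ ?_
        rw [sum_neg_one_pow_choose_mul_ascPochhammer_eval_mul_ascPochhammer_eval
          (Nat.lt_succ_iff.mp (mem_range.mp hm))]
    _ = _ := by
        refine sum_congr rfl fun j _ ↦ ?_
        rw [add_right_comm z, add_comm z]
        ring

theorem ascPochhammer_eval_eq_neg_one_pow_mul [CommRing R] {j k : ℕ} (hjk : j ≤ k) (w : R) :
    (ascPochhammer R k).eval w =
      (-1) ^ j * (ascPochhammer R j).eval (1 - w - k) * (ascPochhammer R (k - j)).eval w := by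
  have hsplit := ascPochhammer_eval_add_nat (k - j) j w
  rw [Nat.sub_add_cancel hjk] at hsplit
  rw [hsplit, show 1 - w - k = -(w + (k - j : ℕ) + j - 1) by push_cast [Nat.cast_sub hjk]; ring,
    ascPochhammer_eval_neg, show w + (k - j : ℕ) + j - 1 - j + 1 = w + (k - j : ℕ) by ring,
    ← mul_assoc, ← mul_pow, neg_one_mul, neg_neg, one_pow, one_mul, mul_comm]

end Pochhammer

section Field

variable {K : Type*} [Field K] [CharZero K]

/-- `terminating3F2 a b n c d` is `₃F₂(a, b, -n; c, d; 1)`. -/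
noncomputable def terminating3F2 (a b : K) (n : ℕ) (c d : K) : K :=
  ∑ j ∈ range (n + 1), (ascPochhammer K j).eval a * (ascPochhammer K j).eval b *
    (ascPochhammer K j).eval (-(n : K)) /
      ((ascPochhammer K j).eval c * (ascPochhammer K j).eval d * (j.factorial : K))

theorem prefactor_mul_term_eq_choose_mul {j k : ℕ} (hjk : j ≤ k) {x y u w : K}
    (hu : (ascPochhammer K j).eval u ≠ 0) (hw : (ascPochhammer K j).eval (1 - w - k) ≠ 0) :
    (ascPochhammer K k).eval u * (ascPochhammer K k).eval w / (k.factorial : K) *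
      ((ascPochhammer K j).eval x * (ascPochhammer K j).eval y *
        (ascPochhammer K j).eval (-(k : K)) /
          ((ascPochhammer K j).eval u * (ascPochhammer K j).eval (1 - w - k) *
            (j.factorial : K))) =
      (k.choose j : K) * (ascPochhammer K j).eval x * (ascPochhammer K j).eval y *
        (ascPochhammer K (k - j)).eval (u + j) * (ascPochhammer K (k - j)).eval w /
          (k.factorial : K) := by
  have hsplit := ascPochhammer_eval_add_nat j (k - j) u
  rw [Nat.add_sub_cancel' hjk] at hsplit
  have hj : (j.factorial : K) ≠ 0 := Nat.cast_ne_zero.mpr j.factorial_ne_zero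
  rw [hsplit, ascPochhammer_eval_eq_neg_one_pow_mul hjk w, ascPochhammer_eval_neg_natCast]
  calc _ = (ascPochhammer K j).eval u / (ascPochhammer K j).eval u *
        ((ascPochhammer K j).eval (1 - w - k) / (ascPochhammer K j).eval (1 - w - k)) *
        ((j.factorial : K) / j.factorial) * ((-1) ^ j * (-1) ^ j) *
        ((k.choose j : K) * (ascPochhammer K j).eval x * (ascPochhammer K j).eval y *
          (ascPochhammer K (k - j)).eval (u + j) * (ascPochhammer K (k - j)).eval w /
            (k.factorial : K)) := by ring
    _ = _ := by rw [div_self hu, div_self hw, div_self hj, ← mul_pow]; norm_num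

theorem prefactor_mul_term_eq_neg_one_pow_choose_mul {j k : ℕ} (hjk : j ≤ k) {x y u v : K}
    (hu : (ascPochhammer K j).eval u ≠ 0) (hv : (ascPochhammer K j).eval v ≠ 0) :
    (ascPochhammer K k).eval u * (ascPochhammer K k).eval v / (k.factorial : K) *
      ((ascPochhammer K j).eval x * (ascPochhammer K j).eval y *
        (ascPochhammer K j).eval (-(k : K)) /
          ((ascPochhammer K j).eval u * (ascPochhammer K j).eval v * (j.factorial : K))) =
      (-1) ^ j * (k.choose j : K) * (ascPochhammer K j).eval x * (ascPochhammer K j).eval y *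
        (ascPochhammer K (k - j)).eval (u + j) * (ascPochhammer K (k - j)).eval (v + j) /
          (k.factorial : K) := by
  have hsplit (t : K) := ascPochhammer_eval_add_nat j (k - j) t
  rw [Nat.add_sub_cancel' hjk] at hsplit
  have hj : (j.factorial : K) ≠ 0 := Nat.cast_ne_zero.mpr j.factorial_ne_zero
  rw [hsplit u, hsplit v, ascPochhammer_eval_neg_natCast]
  calc _ = (ascPochhammer K j).eval u / (ascPochhammer K j).eval u *
        ((ascPochhammer K j).eval v / (ascPochhammer K j).eval v) *
        ((j.factorial : K) / j.factorial) *
        ((-1) ^ j * (k.choose j : K) * (ascPochhammer K j).eval x * (ascPochhammer K j).eval y *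
          (ascPochhammer K (k - j)).eval (u + j) * (ascPochhammer K (k - j)).eval (v + j) /
            (k.factorial : K)) := by ring
    _ = _ := by rw [div_self hu, div_self hv, div_self hj, one_mul, one_mul, one_mul]

theorem terminating3F2_transformation (k : ℕ) (x y z w : K)
    (hyz : ∀ j ≤ k, (ascPochhammer K j).eval (y + z) ≠ 0)
    (hw : ∀ j ≤ k, (ascPochhammer K j).eval (1 - w - k) ≠ 0)
    (hwx : ∀ j ≤ k, (ascPochhammer K j).eval (w + x) ≠ 0) :
    (ascPochhammer K k).eval (y + z) * (ascPochhammer K k).eval w / (k.factorial : K) *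
        terminating3F2 x y k (y + z) (1 - w - k) =
      (ascPochhammer K k).eval (w + x) * (ascPochhammer K k).eval (y + z) / (k.factorial : K) *
        terminating3F2 z x k (w + x) (y + z) := by
  have hle {j : ℕ} (hj : j ∈ range (k + 1)) : j ≤ k := Nat.lt_succ_iff.mp (mem_range.mp hj)
  rw [terminating3F2, terminating3F2, mul_sum, mul_sum,
    sum_congr rfl fun j hj ↦
      prefactor_mul_term_eq_choose_mul (hle hj) (hyz j (hle hj)) (hw j (hle hj)),
    sum_congr rfl fun j hj ↦
      prefactor_mul_term_eq_neg_one_pow_choose_mul (hle hj) (hwx j (hle hj)) (hyz j (hle hj)),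
    ← sum_div, ← sum_div, sum_choose_ascPochhammer_eq_sum_neg_one_pow]

end Field

theorem A3_two_3F2_representations_general (k : ℕ) (a3 a4 b1 b2 b3 : ℂ)
    (h1 : ∀ j ≤ k, (ascPochhammer ℂ j).eval (b3 + b2 - a4 - a3) ≠ 0)
    (h2 : ∀ j ≤ k, (ascPochhammer ℂ j).eval (1 + a3 - b1 - k) ≠ 0)
    (h3 : ∀ j ≤ k, (ascPochhammer ℂ j).eval (b1 + b3 - a3 - a4) ≠ 0) :
    (ascPochhammer ℂ k).eval (b3 + b2 - a4 - a3) * (ascPochhammer ℂ k).eval (b1 - a3) /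
          (k.factorial : ℂ) *
        ∑ j ∈ range (k + 1),
          (ascPochhammer ℂ j).eval (b3 - a4) * (ascPochhammer ℂ j).eval (b2 - a4) *
              (ascPochhammer ℂ j).eval (-(k : ℂ)) /
            ((ascPochhammer ℂ j).eval (b3 + b2 - a4 - a3) *
              (ascPochhammer ℂ j).eval (1 + a3 - b1 - k) * (j.factorial : ℂ)) =
      (ascPochhammer ℂ k).eval (b1 + b3 - a3 - a4) *
          (ascPochhammer ℂ k).eval (b2 + b3 - a3 - a4) / (k.factorial : ℂ) *
        ∑ j ∈ range (k + 1),
          (ascPochhammer ℂ j).eval (b3 - a3) * (ascPochhammer ℂ j).eval (b3 - a4) *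
              (ascPochhammer ℂ j).eval (-(k : ℂ)) /
            ((ascPochhammer ℂ j).eval (b1 + b3 - a3 - a4) *
              (ascPochhammer ℂ j).eval (b2 + b3 - a3 - a4) * (j.factorial : ℂ)) := by
  have hyz : b3 + b2 - a4 - a3 = (b2 - a4) + (b3 - a3) := by ring
  have hyz' : b2 + b3 - a3 - a4 = (b2 - a4) + (b3 - a3) := by ring
  have hw : 1 + a3 - b1 - k = 1 - (b1 - a3) - k := by ring
  have hwx : b1 + b3 - a3 - a4 = (b1 - a3) + (b3 - a4) := by ring
  rw [hyz] at h1
  rw [hw] at h2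
  rw [hwx] at h3
  rw [hyz, hyz', hw, hwx]
  exact terminating3F2_transformation k (b3 - a4) (b2 - a4) (b3 - a3) (b1 - a3) h1 h2 h3

theorem A3_two_3F2_representations (k : ℕ) (a3 a4 b1 b2 b3 : ℂ)
    (h1 : ∀ j ≤ k, (ascPochhammer ℂ j).eval (b3 + b2 - a4 - a3) ≠ 0)
    (h2 : ∀ j ≤ k, (ascPochhammer ℂ j).eval (1 + a3 - b1 - k) ≠ 0)
    (h3 : ∀ j ≤ k, (ascPochhammer ℂ j).eval (b1 + b3 - a3 - a4) ≠ 0)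
    (h4 : ∀ j ≤ k, (ascPochhammer ℂ j).eval (b2 + b3 - a3 - a4) ≠ 0) :
    (ascPochhammer ℂ k).eval (b3 + b2 - a4 - a3) * (ascPochhammer ℂ k).eval (b1 - a3) /
          (k.factorial : ℂ) *
        ∑ j ∈ range (k + 1),
          (ascPochhammer ℂ j).eval (b3 - a4) * (ascPochhammer ℂ j).eval (b2 - a4) *
              (ascPochhammer ℂ j).eval (-(k : ℂ)) /
            ((ascPochhammer ℂ j).eval (b3 + b2 - a4 - a3) *
              (ascPochhammer ℂ j).eval (1 + a3 - b1 - k) * (j.factorial : ℂ)) =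
      (ascPochhammer ℂ k).eval (b1 + b3 - a3 - a4) *
          (ascPochhammer ℂ k).eval (b2 + b3 - a3 - a4) / (k.factorial : ℂ) *
        ∑ j ∈ range (k + 1),
          (ascPochhammer ℂ j).eval (b3 - a3) * (ascPochhammer ℂ j).eval (b3 - a4) *
              (ascPochhammer ℂ j).eval (-(k : ℂ)) /
            ((ascPochhammer ℂ j).eval (b1 + b3 - a3 - a4) *
              (ascPochhammer ℂ j).eval (b2 + b3 - a3 - a4) * (j.factorial : ℂ)) :=
  A3_two_3F2_representations_general k a3 a4 b1 b2 b3 h1 h2 h3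
end
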